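/- Let y = Ax + v, where A ∈ ℝ^{m×n}, x ∈ ℝⁿ is K-sparse with nonempty support Ω = supp(x), Ω^c ≠ ∅, and ‖v‖₂ ≤ ε. Suppose δ ∈ [0,1) satisfies the RIP of order K+1 for A with δ < 1/√(K+1), and suppose min_{i∈Ω}|x_i| > 2ε/(1 − √(K+1)·δ). Then for every subset S ⊆ Ω with |S| < |Ω|, the residual r = P_S^⊥ y = P_S^⊥(Ax + v) satisfies max_{i∈Ω∖S} |⟨r, A_i⟩| > max_{j∈Ω^c} |⟨r, A_j⟩|; that is, the index selected by the OMP greedy rule at this step necessarily belongs to Ω. -/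

import Mathlib

open Matrix Finset

/-- The Euclidean (`ℓ₂`) norm of a real vector. -/
noncomputable def l2norm {ι : Type*} [Fintype ι] (v : ι → ℝ) : ℝ :=
  Real.sqrt (∑ i, v i ^ 2)

/-- The support `{i : x i ≠ 0}` of a vector, as a `Finset`. -/
noncomputable def sparseSupport {n : ℕ} (x : Fin n → ℝ) : Finset (Fin n) :=
  Finset.univ.filter (fun i => x i ≠ 0)

/-- `δ` satisfies the restricted isometry property of order `k` for `A`:
`(1-δ)‖x‖₂² ≤ ‖Ax‖₂² ≤ (1+δ)‖x‖₂²` for all `x` with at most `k` nonzero entries. -/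
def RIP {m n : ℕ} (A : Matrix (Fin m) (Fin n) ℝ) (k : ℕ) (δ : ℝ) : Prop :=
  ∀ x : Fin n → ℝ, (sparseSupport x).card ≤ k →
    (1 - δ) * (∑ i, x i ^ 2) ≤ (∑ i, (A.mulVec x) i ^ 2) ∧
    (∑ i, (A.mulVec x) i ^ 2) ≤ (1 + δ) * (∑ i, x i ^ 2)

/-- The submatrix `A_S` of `A` containing only the columns indexed by `S`. -/
def colSub {m n : ℕ} (A : Matrix (Fin m) (Fin n) ℝ) (S : Finset (Fin n)) :
    Matrix (Fin m) {j // j ∈ S} ℝ :=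
  fun i j => A i j.1

/-- The orthogonal complement projector `P_S^⊥ = I - A_S (A_Sᵀ A_S)⁻¹ A_Sᵀ`
(equal to `I` when `S = ∅`). -/
noncomputable def projPerp {m n : ℕ} (A : Matrix (Fin m) (Fin n) ℝ) (S : Finset (Fin n)) :
    Matrix (Fin m) (Fin m) ℝ :=
  1 - colSub A S * ((colSub A S)ᵀ * colSub A S)⁻¹ * (colSub A S)ᵀ

/-- The subvector `x_T`, extended by zero outside `T` (so that `A_T x_T = A (restrictVec x T)`). -/
def restrictVec {n : ℕ} (x : Fin n → ℝ) (T : Finset (Fin n)) : Fin n → ℝ :=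
  fun i => if i ∈ T then x i else 0

/-- `‖(w i)_{i ∈ T}‖_∞ = max_{i ∈ T} |w i|` (equal to `0` when `T = ∅`). -/
noncomputable def supAbs {n : ℕ} (T : Finset (Fin n)) (w : Fin n → ℝ) : ℝ :=
  sSup ((fun i => |w i|) '' ↑T)

/-!
Write `x = x_S + u` with `u` supported on `T = Ω \ S`. Since `P = P_S^⊥` annihilates the columns
indexed by `S` and is a symmetric idempotent, the correlations are `w = Bᵀ (B u + v)` with
`B = P A`, and `B` keeps the restricted isometry constant `δ` on sparse vectors vanishing on `S`.
For a wrong index `j`, test `w` against `z = u - √|T| ‖u‖ sign(w j) e_j`: polarizing the RIP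
bounds gives `⟪w, z⟫ ≥ ‖u‖ (‖u‖ (1 - δ √(|T|+1)) - ε √(1+δ) √(|T|+1))`, while Cauchy–Schwarz on
`T` gives `⟪w, z⟫ ≤ √|T| ‖u‖ (max_T |w i| - |w j|)`. The lower bound on `min_Ω |x i|` makes the
first quantity positive.
-/

section DotProduct

variable {ι : Type*} [Fintype ι]

lemma sum_sq_eq_dotProduct_self (z : ι → ℝ) : ∑ i, z i ^ 2 = z ⬝ᵥ z := by
  simp only [dotProduct, sq]

lemma dotProduct_self_nonneg (z : ι → ℝ) : 0 ≤ z ⬝ᵥ z := by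
  simpa using dotProduct_self_star_nonneg z

lemma l2norm_sq (z : ι → ℝ) : l2norm z ^ 2 = z ⬝ᵥ z := by
  rw [l2norm, Real.sq_sqrt (by positivity), sum_sq_eq_dotProduct_self]

lemma l2norm_nonneg (z : ι → ℝ) : 0 ≤ l2norm z := Real.sqrt_nonneg _

lemma l2norm_eq_sqrt_dotProduct_self (z : ι → ℝ) : l2norm z = √(z ⬝ᵥ z) := by
  rw [l2norm, sum_sq_eq_dotProduct_self]

lemma l2norm_eq_zero_iff {z : ι → ℝ} : l2norm z = 0 ↔ z = 0 := by
  rw [← sq_eq_zero_iff, l2norm_sq, dotProduct_self_eq_zero]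

lemma abs_dotProduct_le_l2norm_mul_l2norm (z w : ι → ℝ) :
    |z ⬝ᵥ w| ≤ l2norm z * l2norm w := by
  rw [← Real.sqrt_sq_eq_abs, l2norm, l2norm, ← Real.sqrt_mul (by positivity)]
  exact Real.sqrt_le_sqrt (Finset.sum_mul_sq_le_sq_mul_sq _ _ _)

lemma dotProduct_mulVec_self_le_of_transpose_eq_of_mul_self_eq {P : Matrix ι ι ℝ}
    (hPT : Pᵀ = P) (hPP : P * P = P) (w : ι → ℝ) :
    (P *ᵥ w) ⬝ᵥ (P *ᵥ w) ≤ w ⬝ᵥ w := by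
  have hself : (P *ᵥ w) ⬝ᵥ (P *ᵥ w) = w ⬝ᵥ (P *ᵥ w) := by
    have hvecMul : (P *ᵥ w) ᵥ* P = P *ᵥ (P *ᵥ w) := by
      simpa [hPT] using vecMul_transpose P (P *ᵥ w)
    rw [dotProduct_mulVec, hvecMul, mulVec_mulVec, hPP, dotProduct_comm]
  have hnonneg := dotProduct_self_nonneg (w - P *ᵥ w)
  simp only [sub_dotProduct, dotProduct_sub, dotProduct_comm (P *ᵥ w) w] at hnonneg
  linarith

lemma dotProduct_le_sup'_abs_mul {T : Finset ι} (hT : T.Nonempty) {u : ι → ℝ}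
    (huT : ∀ i ∉ T, u i = 0) (w : ι → ℝ) :
    w ⬝ᵥ u ≤ T.sup' hT (fun i => |w i|) * (√(#T : ℝ) * l2norm u) := by
  set α := T.sup' hT fun i => |w i|
  have hα : 0 ≤ α := (abs_nonneg _).trans (Finset.le_sup' (fun i => |w i|) hT.choose_spec)
  have hsumT : ∀ f : ι → ℝ, (∀ i ∉ T, f i = 0) → ∑ i ∈ T, f i = ∑ i, f i := fun f hf =>
    Finset.sum_subset (Finset.subset_univ T) fun i _ hi => hf i hi
  have hw : ∑ i ∈ T, w i ^ 2 ≤ #T * α ^ 2 := by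
    rw [← nsmul_eq_mul]
    refine Finset.sum_le_card_nsmul _ _ _ fun i hi => ?_
    rw [← sq_abs]
    exact pow_le_pow_left₀ (abs_nonneg _) (Finset.le_sup' (fun i => |w i|) hi) 2
  calc w ⬝ᵥ u = ∑ i ∈ T, w i * u i :=
        (hsumT _ fun i hi => by rw [huT i hi, mul_zero]).symm
    _ ≤ √(∑ i ∈ T, w i ^ 2) * √(∑ i ∈ T, u i ^ 2) := Real.sum_mul_le_sqrt_mul_sqrt _ _ _
    _ ≤ √(#T * α ^ 2) * l2norm u := by
        rw [hsumT (fun i => u i ^ 2) fun i hi => by rw [huT i hi, sq, mul_zero]]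
        exact mul_le_mul_of_nonneg_right (Real.sqrt_le_sqrt hw) (l2norm_nonneg u)
    _ = α * (√(#T : ℝ) * l2norm u) := by
        rw [Real.sqrt_mul (Nat.cast_nonneg _), Real.sqrt_sq hα]
        ring

end DotProduct

lemma mem_sparseSupport {n : ℕ} {x : Fin n → ℝ} {i : Fin n} :
    i ∈ sparseSupport x ↔ x i ≠ 0 := by
  simp [sparseSupport]

lemma card_sparseSupport_le {n : ℕ} {z : Fin n → ℝ} {U : Finset (Fin n)}
    (hz : ∀ i ∉ U, z i = 0) : (sparseSupport z).card ≤ U.card :=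
  Finset.card_le_card fun i hi => by
    by_contra hiU
    exact mem_sparseSupport.1 hi (hz i hiU)

lemma supAbs_eq_sup' {n : ℕ} {T : Finset (Fin n)} (hT : T.Nonempty) (w : Fin n → ℝ) :
    supAbs T w = T.sup' hT fun i => |w i| := by
  rw [supAbs, Finset.sup'_eq_csSup_image]

lemma restrictVec_mem_spanSubset {n : ℕ} (x : Fin n → ℝ) {T U : Finset (Fin n)}
    (hTU : T ⊆ U) :
    restrictVec x T ∈ Pi.spanSubset ℝ ↑U :=
  Pi.mem_spanSubset_iff.2 fun _ hi => if_neg fun h => hi (hTU h)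

lemma apply_eq_restrictVec_sparseSupport_sdiff {n : ℕ} (x : Fin n → ℝ) {S : Finset (Fin n)}
    {i : Fin n} (hi : i ∉ S) : x i = restrictVec x (sparseSupport x \ S) i := by
  by_cases hx : x i = 0
  · rw [hx, restrictVec, if_neg fun h => mem_sparseSupport.1 (Finset.mem_sdiff.1 h).1 hx]
  · rw [restrictVec, if_pos (Finset.mem_sdiff.2 ⟨mem_sparseSupport.2 hx, hi⟩)]

lemma sqrt_card_mul_lt_l2norm_restrictVec {n : ℕ} {x : Fin n → ℝ} {T : Finset (Fin n)}
    (hT : T.Nonempty) {μ : ℝ} (hx : ∀ i ∈ T, μ < |x i|) :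
    √(#T : ℝ) * μ < l2norm (restrictVec x T) := by
  rcases lt_or_ge μ 0 with hμ | hμ
  · have hT' : (0 : ℝ) < √(#T : ℝ) := Real.sqrt_pos.2 (Nat.cast_pos.2 hT.card_pos)
    exact (mul_neg_of_pos_of_neg hT' hμ).trans_le (l2norm_nonneg _)
  refine lt_of_pow_lt_pow_left₀ 2 (l2norm_nonneg _) ?_
  rw [mul_pow, Real.sq_sqrt (Nat.cast_nonneg _), l2norm, Real.sq_sqrt (by positivity),
    ← nsmul_eq_mul, ← Finset.sum_const]
  simp only [restrictVec, ite_pow, ne_eq, OfNat.ofNat_ne_zero, not_false_eq_true, zero_pow,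
    Finset.sum_ite_mem, Finset.univ_inter]
  refine Finset.sum_lt_sum_of_nonempty hT fun i hi => ?_
  rw [← sq_abs (x i)]
  exact pow_lt_pow_left₀ (hx i hi) hμ two_ne_zero

section Projection

variable {m n : ℕ} {A : Matrix (Fin m) (Fin n) ℝ} {S : Finset (Fin n)}

lemma colSub_mulVec (A : Matrix (Fin m) (Fin n) ℝ) (S : Finset (Fin n))
    (d : {j // j ∈ S} → ℝ) :
    colSub A S *ᵥ d = A *ᵥ fun i => if h : i ∈ S then d ⟨i, h⟩ else 0 := by
  ext r
  simp only [mulVec, dotProduct, colSub, mul_dite, mul_zero]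
  exact Finset.sum_attach_eq_sum_dite S fun j => A r j * d j

lemma mulVec_eq_colSub_mulVec {c : Fin n → ℝ} (hc : ∀ i ∉ S, c i = 0) :
    A *ᵥ c = colSub A S *ᵥ fun j => c j := by
  rw [colSub_mulVec]
  congr 1
  ext i
  split_ifs with h
  · rfl
  · exact hc i h

lemma projPerp_transpose (A : Matrix (Fin m) (Fin n) ℝ) (S : Finset (Fin n)) :
    (projPerp A S)ᵀ = projPerp A S := by
  rw [projPerp, transpose_sub, transpose_one, transpose_mul, transpose_mul, transpose_transpose,
    transpose_nonsing_inv, transpose_mul, transpose_transpose, Matrix.mul_assoc]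

lemma exists_projPerp_mulVec_mulVec_eq (z : Fin n → ℝ) :
    ∃ c : Fin n → ℝ, (∀ i ∉ S, c i = 0) ∧ projPerp A S *ᵥ (A *ᵥ z) = A *ᵥ (z - c) := by
  set d := (((colSub A S)ᵀ * colSub A S)⁻¹ * (colSub A S)ᵀ) *ᵥ (A *ᵥ z)
  refine ⟨fun i => if h : i ∈ S then d ⟨i, h⟩ else 0, fun i hi => dif_neg hi, ?_⟩
  rw [mulVec_sub, ← colSub_mulVec, mulVec_mulVec (M := colSub A S), projPerp, sub_mulVec,
    one_mulVec, Matrix.mul_assoc]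

variable (hG : IsUnit ((colSub A S)ᵀ * colSub A S).det)
include hG

lemma projPerp_mul_colSub : projPerp A S * colSub A S = 0 := by
  rw [projPerp, Matrix.sub_mul, Matrix.one_mul, Matrix.mul_assoc, Matrix.mul_assoc,
    nonsing_inv_mul _ hG, Matrix.mul_one, sub_self]

lemma projPerp_mul_self : projPerp A S * projPerp A S = projPerp A S := by
  nth_rewrite 2 [projPerp]
  rw [Matrix.mul_sub, Matrix.mul_one, ← Matrix.mul_assoc, ← Matrix.mul_assoc,
    projPerp_mul_colSub hG, Matrix.zero_mul, Matrix.zero_mul, sub_zero]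

lemma projPerp_mulVec_mulVec_eq_zero {c : Fin n → ℝ} (hc : ∀ i ∉ S, c i = 0) :
    projPerp A S *ᵥ (A *ᵥ c) = 0 := by
  rw [mulVec_eq_colSub_mulVec hc, mulVec_mulVec, projPerp_mul_colSub hG, zero_mulVec]

lemma transpose_mulVec_projPerp_mulVec_add {x u : Fin n → ℝ} (hxu : ∀ i ∉ S, x i = u i)
    (v : Fin m → ℝ) :
    Aᵀ *ᵥ (projPerp A S *ᵥ (A *ᵥ x + v))
      = (projPerp A S * A)ᵀ *ᵥ ((projPerp A S * A) *ᵥ u + v) := by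
  have hx : projPerp A S *ᵥ (A *ᵥ x) = projPerp A S *ᵥ (A *ᵥ u) := by
    rw [← sub_eq_zero, ← mulVec_sub, ← mulVec_sub]
    exact projPerp_mulVec_mulVec_eq_zero hG fun i hi => sub_eq_zero.2 (hxu i hi)
  rw [transpose_mul, projPerp_transpose, ← mulVec_mulVec, ← mulVec_mulVec]
  simp only [mulVec_add]
  rw [mulVec_mulVec (M := projPerp A S) (N := projPerp A S), projPerp_mul_self hG, hx]

end Projection

lemma isUnit_det_gram_of_rip {m n K : ℕ} {A : Matrix (Fin m) (Fin n) ℝ} {S : Finset (Fin n)}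
    {δ : ℝ} (hRIP : RIP A K δ) (hδ : δ < 1) (hS : S.card ≤ K) :
    IsUnit ((colSub A S)ᵀ * colSub A S).det := by
  rw [← isUnit_iff_isUnit_det, ← mulVec_injective_iff_isUnit,
    ← conjTranspose_eq_transpose_of_trivial]
  refine (injective_iff_map_eq_zero ((colSub A S)ᴴ * colSub A S).mulVecLin).2 fun d hd => ?_
  rw [mulVecLin_apply, conjTranspose_mul_self_mulVec_eq_zero, colSub_mulVec] at hd
  set c : Fin n → ℝ := fun i => if h : i ∈ S then d ⟨i, h⟩ else 0
  have hRIPc := (hRIP c (le_trans (card_sparseSupport_le fun i hi => dif_neg hi) hS)).1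
  rw [hd, sum_sq_eq_dotProduct_self, sum_sq_eq_dotProduct_self, dotProduct_zero] at hRIPc
  have hc : c = 0 := dotProduct_self_eq_zero.1 <|
    le_antisymm (nonpos_of_mul_nonpos_right hRIPc (by linarith)) (dotProduct_self_nonneg c)
  ext j
  simpa [c] using congrFun hc j

lemma exists_sq_eq_one_and_mul_eq_abs (a : ℝ) : ∃ σ : ℝ, σ ^ 2 = 1 ∧ σ * a = |a| := by
  rcases le_total 0 a with ha | ha
  · exact ⟨1, by norm_num, by rw [one_mul, abs_of_nonneg ha]⟩
  · exact ⟨-1, by norm_num, by rw [abs_of_nonpos ha]; ring⟩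

/-- The RIP of order `k` says this for `A` on every coordinate subspace of dimension `k`. -/
def IsNearIsometryOn {κ ι : Type*} [Fintype κ] [Fintype ι] (B : Matrix κ ι ℝ)
    (W : Submodule ℝ (ι → ℝ)) (δ : ℝ) : Prop :=
  ∀ z ∈ W, (1 - δ) * (z ⬝ᵥ z) ≤ (B *ᵥ z) ⬝ᵥ (B *ᵥ z) ∧
    (B *ᵥ z) ⬝ᵥ (B *ᵥ z) ≤ (1 + δ) * (z ⬝ᵥ z)

section NearIsometry

variable {κ ι : Type*} [Fintype κ] [Fintype ι] {B : Matrix κ ι ℝ} {W : Submodule ℝ (ι → ℝ)}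
  {δ : ℝ}

lemma IsNearIsometryOn.l2norm_mulVec_le (hB : IsNearIsometryOn B W δ) {z : ι → ℝ}
    (hz : z ∈ W) : l2norm (B *ᵥ z) ≤ √(1 + δ) * l2norm z := by
  rw [l2norm_eq_sqrt_dotProduct_self, l2norm_eq_sqrt_dotProduct_self,
    ← Real.sqrt_mul' _ (dotProduct_self_nonneg z)]
  exact Real.sqrt_le_sqrt (hB z hz).2

/-- Polarization: apply both RIP bounds to `‖z₂‖ z₁ ± ‖z₁‖ z₂` and subtract. -/
lemma IsNearIsometryOn.dotProduct_sub_le (hB : IsNearIsometryOn B W δ) {z₁ z₂ : ι → ℝ}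
    (h₁ : z₁ ∈ W) (h₂ : z₂ ∈ W) :
    z₁ ⬝ᵥ z₂ - δ * l2norm z₁ * l2norm z₂ ≤ (B *ᵥ z₁) ⬝ᵥ (B *ᵥ z₂) := by
  rcases (l2norm_nonneg z₁).eq_or_lt with ha | ha
  · rw [← ha]
    simp [l2norm_eq_zero_iff.1 ha.symm]
  rcases (l2norm_nonneg z₂).eq_or_lt with hb | hb
  · rw [← hb]
    simp [l2norm_eq_zero_iff.1 hb.symm]
  set a := l2norm z₁
  set b := l2norm z₂
  have hp := (hB (b • z₁ + a • z₂) (W.add_mem (W.smul_mem b h₁) (W.smul_mem a h₂))).1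
  have hq := (hB (b • z₁ - a • z₂) (W.sub_mem (W.smul_mem b h₁) (W.smul_mem a h₂))).2
  simp only [mulVec_add, mulVec_sub, mulVec_smul, add_dotProduct, dotProduct_add,
    sub_dotProduct, dotProduct_sub, smul_dotProduct, dotProduct_smul, smul_eq_mul,
    dotProduct_comm z₂ z₁, dotProduct_comm (B *ᵥ z₂) (B *ᵥ z₁), ← l2norm_sq] at hp hq
  have hab : 0 < 4 * (a * b) := by positivity
  refine le_of_mul_le_mul_left ?_ hab
  nlinarith

lemma IsNearIsometryOn.le_sqrt_card_mul_sup'_sub_abs [DecidableEq ι]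
    (hB : IsNearIsometryOn B W δ) {T : Finset ι} (hT : T.Nonempty) {u : ι → ℝ} (hu : u ∈ W)
    (huT : ∀ i ∉ T, u i = 0)
    {j : ι} (hjT : j ∉ T) (hj : Pi.single j 1 ∈ W) {v : κ → ℝ} {ε : ℝ} (hv : l2norm v ≤ ε) :
    l2norm u * (l2norm u * (1 - δ * √(#T + 1 : ℝ)) - ε * (√(1 + δ) * √(#T + 1 : ℝ)))
      ≤ l2norm u * (√(#T : ℝ) *
        (T.sup' hT (fun i => |(Bᵀ *ᵥ (B *ᵥ u + v)) i|) - |(Bᵀ *ᵥ (B *ᵥ u + v)) j|)) := by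
  set N := l2norm u
  set w := Bᵀ *ᵥ (B *ᵥ u + v)
  obtain ⟨σ, hσ2, hσw⟩ := exists_sq_eq_one_and_mul_eq_abs (w j)
  set t := √(#T : ℝ) * N * σ
  set z := u - Pi.single j t
  have hz : z ∈ W := by
    have hsingle := W.smul_mem t hj
    rw [← Pi.single_smul', smul_eq_mul, mul_one] at hsingle
    exact W.sub_mem hu hsingle
  have huj : u j = 0 := huT j hjT
  have hwz : w ⬝ᵥ z = (B *ᵥ u) ⬝ᵥ (B *ᵥ z) + v ⬝ᵥ (B *ᵥ z) := by
    rw [← add_dotProduct, dotProduct_mulVec, ← mulVec_transpose]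
  have hwz' : w ⬝ᵥ z = w ⬝ᵥ u - √(#T : ℝ) * N * |w j| := by
    rw [dotProduct_sub, dotProduct_single, ← hσw]
    ring
  have huz : u ⬝ᵥ z = N ^ 2 := by
    rw [dotProduct_sub, dotProduct_single, huj, l2norm_sq]
    ring
  have hzz : l2norm z = √(#T + 1 : ℝ) * N := by
    have hsq : z ⬝ᵥ z = (#T + 1) * N ^ 2 := by
      have ht : t ^ 2 = #T * N ^ 2 := by
        rw [mul_pow, mul_pow, hσ2, Real.sq_sqrt (Nat.cast_nonneg _), mul_one]
      simp only [z, sub_dotProduct, dotProduct_sub, dotProduct_single, single_dotProduct,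
        Pi.sub_apply, Pi.single_eq_same, huj, ← l2norm_sq]
      linear_combination ht
    rw [l2norm_eq_sqrt_dotProduct_self, hsq, Real.sqrt_mul (by positivity),
      Real.sqrt_sq (l2norm_nonneg u)]
  have hsignal := hB.dotProduct_sub_le hu hz
  have hnoise : |v ⬝ᵥ (B *ᵥ z)| ≤ ε * (√(1 + δ) * l2norm z) :=
    (abs_dotProduct_le_l2norm_mul_l2norm _ _).trans <|
      mul_le_mul hv (hB.l2norm_mulVec_le hz) (l2norm_nonneg _) ((l2norm_nonneg v).trans hv)
  have hwu := dotProduct_le_sup'_abs_mul hT huT w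
  rw [huz, hzz] at hsignal
  rw [hzz] at hnoise
  linarith [neg_abs_le (v ⬝ᵥ (B *ᵥ z))]

lemma IsNearIsometryOn.abs_lt_sup' [DecidableEq ι]
    (hB : IsNearIsometryOn B W δ) {T : Finset ι} (hT : T.Nonempty) {u : ι → ℝ} (hu : u ∈ W)
    (huT : ∀ i ∉ T, u i = 0)
    {j : ι} (hjT : j ∉ T) (hj : Pi.single j 1 ∈ W) {v : κ → ℝ} {ε : ℝ} (hv : l2norm v ≤ ε)
    (hsignal : ε * (√(1 + δ) * √(#T + 1 : ℝ)) < l2norm u * (1 - δ * √(#T + 1 : ℝ))) :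
    |(Bᵀ *ᵥ (B *ᵥ u + v)) j| < T.sup' hT (fun i => |(Bᵀ *ᵥ (B *ᵥ u + v)) i|) := by
  have hε : 0 ≤ ε := (l2norm_nonneg v).trans hv
  have hu0 : 0 < l2norm u := by
    refine (l2norm_nonneg u).lt_of_ne fun hu0 => ?_
    rw [← hu0, zero_mul] at hsignal
    exact hsignal.not_ge (by positivity)
  have key := le_of_mul_le_mul_left (hB.le_sqrt_card_mul_sup'_sub_abs hT hu huT hjT hj hv) hu0
  exact sub_pos.1 <| pos_of_mul_pos_right ((sub_pos.2 hsignal).trans_le key) (Real.sqrt_nonneg _)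

end NearIsometry

lemma isNearIsometryOn_projPerp_mul {m n K : ℕ} {A : Matrix (Fin m) (Fin n) ℝ}
    {S U : Finset (Fin n)} {δ : ℝ} (hRIP : RIP A K δ) (hδ : δ ≤ 1)
    (hG : IsUnit ((colSub A S)ᵀ * colSub A S).det) (hUS : Disjoint U S)
    (hcard : (U ∪ S).card ≤ K) :
    IsNearIsometryOn (projPerp A S * A) (Pi.spanSubset ℝ ↑U) δ := by
  -- lower bound: `P_S^⊥ A z = A (z - c)` with `c` supported on `S`, and `‖z - c‖ ≥ ‖z‖`
  -- because `z` vanishes on `S`; upper bound: `P_S^⊥` is a contraction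
  intro z hz
  rw [Pi.mem_spanSubset_iff] at hz
  rw [← mulVec_mulVec]
  constructor
  · obtain ⟨c, hc, hPAz⟩ := exists_projPerp_mulVec_mulVec_eq (A := A) z
    have hzc : z ⬝ᵥ c = 0 := Finset.sum_eq_zero fun i _ => by
      by_cases hi : i ∈ S
      · rw [hz i (Finset.disjoint_right.1 hUS hi), zero_mul]
      · rw [hc i hi, mul_zero]
    have hsupp : ∀ i ∉ U ∪ S, (z - c) i = 0 := fun i hi => by
      rw [Finset.mem_union, not_or] at hi
      rw [Pi.sub_apply, hz i hi.1, hc i hi.2, sub_zero]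
    have hRIPzc := (hRIP (z - c) ((card_sparseSupport_le hsupp).trans hcard)).1
    rw [sum_sq_eq_dotProduct_self, sum_sq_eq_dotProduct_self, ← hPAz] at hRIPzc
    have hexpand : (z - c) ⬝ᵥ (z - c) = z ⬝ᵥ z + c ⬝ᵥ c := by
      rw [sub_dotProduct, dotProduct_sub, dotProduct_sub, hzc, dotProduct_comm c z, hzc]
      ring
    rw [hexpand] at hRIPzc
    nlinarith [mul_nonneg (sub_nonneg.2 hδ) (dotProduct_self_nonneg c)]
  · have hRIPz := (hRIP z ((card_sparseSupport_le fun i hi => hz i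
      fun hiU => hi (Finset.mem_union_left S hiU)).trans hcard)).2
    rw [sum_sq_eq_dotProduct_self, sum_sq_eq_dotProduct_self] at hRIPz
    have := dotProduct_mulVec_self_le_of_transpose_eq_of_mul_self_eq
      (projPerp_transpose A S) (projPerp_mul_self hG) (A *ᵥ z)
    linarith

lemma isNearIsometryOn_projPerp_mul_insert_sdiff {m n K : ℕ} {A : Matrix (Fin m) (Fin n) ℝ}
    {Ω S : Finset (Fin n)} {δ : ℝ} (hRIP : RIP A (K + 1) δ) (hδ : δ ≤ 1)
    (hG : IsUnit ((colSub A S)ᵀ * colSub A S).det) (hΩ : Ω.card ≤ K) (hS : S ⊆ Ω)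
    {j : Fin n} (hj : j ∉ Ω) :
    IsNearIsometryOn (projPerp A S * A) (Pi.spanSubset ℝ ↑(insert j (Ω \ S))) δ := by
  refine isNearIsometryOn_projPerp_mul hRIP hδ hG
    (Finset.disjoint_insert_left.2 ⟨fun h => hj (hS h), Finset.sdiff_disjoint⟩) ?_
  rw [Finset.insert_union, Finset.sdiff_union_of_subset hS]
  exact (Finset.card_insert_le _ _).trans (by omega)

lemma sqrt_one_add_mul_sqrt_add_one_le {δ l : ℝ} (hδ : δ ≤ 1) (hl : 1 ≤ l) :
    √(1 + δ) * √(l + 1) ≤ 2 * √l := by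
  rw [← Real.sqrt_mul' _ (by linarith), show 2 * √l = √(4 * l) by
    rw [Real.sqrt_mul (by norm_num), show (4 : ℝ) = 2 ^ 2 by norm_num, Real.sqrt_sq two_pos.le]]
  exact Real.sqrt_le_sqrt (by nlinarith)

/-- The factor `2` in the threshold `2ε / (1 - √(K+1) δ)` absorbs
`√(1 + δ) √(l + 1) ≤ 2 √l`. -/
lemma noise_lt_signal_of_sqrt_mul_lt {ε δ N : ℝ} {l K : ℕ} (hε : 0 ≤ ε) (hδ0 : 0 ≤ δ)
    (hδ1 : δ ≤ 1) (hδ : δ < 1 / √((K : ℝ) + 1)) (hl : 1 ≤ l) (hlK : l ≤ K)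
    (hN : √(l : ℝ) * (2 * ε / (1 - √((K : ℝ) + 1) * δ)) < N) :
    ε * (√(1 + δ) * √(l + 1 : ℝ)) < N * (1 - δ * √(l + 1 : ℝ)) := by
  have hD : 0 < 1 - √((K : ℝ) + 1) * δ := by
    have := (lt_div_iff₀ (Real.sqrt_pos.2 (by positivity : (0 : ℝ) < K + 1))).1 hδ
    linarith
  have hsqrt : √(l + 1 : ℝ) ≤ √((K : ℝ) + 1) := Real.sqrt_le_sqrt (by exact_mod_cast by omega)
  calc ε * (√(1 + δ) * √(l + 1 : ℝ)) ≤ ε * (2 * √(l : ℝ)) :=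
        mul_le_mul_of_nonneg_left
          (sqrt_one_add_mul_sqrt_add_one_le hδ1 (by exact_mod_cast hl)) hε
    _ = √(l : ℝ) * (2 * ε / (1 - √((K : ℝ) + 1) * δ)) * (1 - √((K : ℝ) + 1) * δ) := by
        field_simp
    _ < N * (1 - √((K : ℝ) + 1) * δ) := mul_lt_mul_of_pos_right hN hD
    _ ≤ N * (1 - δ * √(l + 1 : ℝ)) := by
        have hN0 : 0 ≤ N := le_trans (by positivity) hN.le
        exact mul_le_mul_of_nonneg_left (by nlinarith) hN0

theorem omp_selects_correct_index_general {m n K : ℕ}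
    (A : Matrix (Fin m) (Fin n) ℝ) (x : Fin n → ℝ) (v : Fin m → ℝ) (ε δ : ℝ)
    (hδ0 : 0 ≤ δ) (hδlt1 : δ < 1)
    (hδ : δ < 1 / Real.sqrt ((K : ℝ) + 1))
    (hRIP : RIP A (K + 1) δ)
    (hx : (sparseSupport x).card ≤ K)
    (hcne : ((sparseSupport x)ᶜ).Nonempty)
    (hv : l2norm v ≤ ε)
    (hmin : ∀ i ∈ sparseSupport x,
      2 * ε / (1 - Real.sqrt ((K : ℝ) + 1) * δ) < |x i|)
    (S : Finset (Fin n)) (hS : S ⊆ sparseSupport x)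
    (hcard : S.card < (sparseSupport x).card) :
    supAbs ((sparseSupport x)ᶜ)
        (Aᵀ.mulVec ((projPerp A S).mulVec (A.mulVec x + v)))
      < supAbs (sparseSupport x \ S)
        (Aᵀ.mulVec ((projPerp A S).mulVec (A.mulVec x + v))) := by
  classical
  set Ω := sparseSupport x
  set T := Ω \ S
  have hT : T.Nonempty := by
    rw [← Finset.card_pos, Finset.card_sdiff_of_subset hS]
    omega
  have hG := isUnit_det_gram_of_rip hRIP hδlt1 (by omega : S.card ≤ K + 1)
  rw [transpose_mulVec_projPerp_mulVec_add hG
      fun i hi => apply_eq_restrictVec_sparseSupport_sdiff x hi, supAbs_eq_sup' hcne,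
    supAbs_eq_sup' hT, Finset.sup'_lt_iff]
  intro j hj
  have hjΩ : j ∉ Ω := Finset.mem_compl.1 hj
  refine (isNearIsometryOn_projPerp_mul_insert_sdiff hRIP hδlt1.le hG hx hS hjΩ).abs_lt_sup' hT
    (restrictVec_mem_spanSubset x (Finset.subset_insert j T)) (fun i hi => if_neg hi)
    (fun h => hjΩ (Finset.mem_sdiff.1 h).1)
    (Pi.mem_spanSubset_iff.2 fun i hi => Pi.single_eq_of_ne (by rintro rfl; simp at hi) 1) hv ?_
  exact noise_lt_signal_of_sqrt_mul_lt ((l2norm_nonneg v).trans hv) hδ0 hδlt1.le hδ hT.card_pos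
    ((Finset.card_le_card Finset.sdiff_subset).trans hx)
    (sqrt_card_mul_lt_l2norm_restrictVec hT fun i hi => hmin i (Finset.mem_sdiff.1 hi).1)

/-- One step of OMP selects a correct index: for any `S ⊆ Ω` with `|S| < |Ω|`,
the residual `r = P_S^⊥(Ax + v)` satisfies
`max_{i∈Ω∖S} |⟨r, A_i⟩| > max_{j∈Ω^c} |⟨r, A_j⟩|`. -/
theorem omp_selects_correct_index {m n K : ℕ} (hK : 1 ≤ K)
    (A : Matrix (Fin m) (Fin n) ℝ) (x : Fin n → ℝ) (v : Fin m → ℝ) (ε δ : ℝ)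
    (hδ0 : 0 ≤ δ) (hδlt1 : δ < 1)
    (hδ : δ < 1 / Real.sqrt ((K : ℝ) + 1))
    (hRIP : RIP A (K + 1) δ)
    (hx : (sparseSupport x).card ≤ K)
    (hne : (sparseSupport x).Nonempty)
    (hcne : ((sparseSupport x)ᶜ).Nonempty)
    (hv : l2norm v ≤ ε)
    (hmin : ∀ i ∈ sparseSupport x,
      2 * ε / (1 - Real.sqrt ((K : ℝ) + 1) * δ) < |x i|)
    (S : Finset (Fin n)) (hS : S ⊆ sparseSupport x)
    (hcard : S.card < (sparseSupport x).card) :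
    supAbs ((sparseSupport x)ᶜ)
        (Aᵀ.mulVec ((projPerp A S).mulVec (A.mulVec x + v)))
      < supAbs (sparseSupport x \ S)
        (Aᵀ.mulVec ((projPerp A S).mulVec (A.mulVec x + v))) :=
  omp_selects_correct_index_general A x v ε δ hδ0 hδlt1 hδ hRIP hx hcne hv hmin S hS hcard
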